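/- arXiv:2410.07013 — 3 statements merged into one kernel-verified Lean document; each statement's English description precedes it below -/
import Mathlib

section
/- Let d_z, d_x be positive natural numbers, and let f, f̂ : (Fin d_z → ℝ) → (Fin d_x → ℝ) be continuously differentiable, injective maps whose derivative (fderiv) is injective at every point, and suppose both f and f̂ have single-parent structure. Let v : (Fin d_z → ℝ) → (Fin d_z → ℝ) be continuously differentiable with a continuously differentiable inverse, and suppose f ∘ v = f̂. Then there exists a permutation π of Fin d_z such that for every i, the i-th coordinate function of v depends only on coordinate π(i), i.e., for all z z' : Fin d_z → ℝ, z (π i) = z' (π i) implies (v z) i = (v z') i. -/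
/-- `g` depends only on the `k`-th coordinate of its input. -/
def DependsOnlyOn {n : ℕ} (g : (Fin n → ℝ) → ℝ) (k : Fin n) : Prop :=
  ∀ z z' : Fin n → ℝ, z k = z' k → g z = g z'

/-- `f` has single-parent structure: each output coordinate depends on a single
input coordinate. -/
def SingleParent {m n : ℕ} (f : (Fin m → ℝ) → (Fin n → ℝ)) : Prop :=
  ∀ j : Fin n, ∃ k : Fin m, DependsOnlyOn (fun z => f z j) k

/-!
Chain rule: if `f` and `f ∘ v` are single-parent and `Df` is injective, every row of `Dv` is a
multiple of a single coordinate functional, because for a child `j` of `i` with `∂ᵢ fⱼ ≠ 0` we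
get `∂(f ∘ v)ⱼ = ∂ᵢ fⱼ · ∂vᵢ`. Rows of the invertible `Dv` never vanish, so by continuity and
connectedness the coordinate of row `i` is a constant `π i`; invertibility makes `π` injective,
and a `C¹` map whose derivative in row `i` only sees coordinate `π i` has `vᵢ` depending only
on `z (π i)`.
-/

open Function

namespace DependsOnlyOn

variable {n : ℕ} {k : Fin n}

theorem fderiv_dependsOnlyOn {g : (Fin n → ℝ) → ℝ} (hg : DependsOnlyOn g k) {z : Fin n → ℝ}
    (hgz : DifferentiableAt ℝ g z) : DependsOnlyOn (fderiv ℝ g z) k := by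
  have hline : ∀ u, HasDerivAt (fun t : ℝ => g (z + t • u)) (fderiv ℝ g z u) 0 := fun u => by
    have h := hgz.hasFDerivAt.comp_hasDerivAt_of_eq (0 : ℝ)
      (((hasDerivAt_id (0 : ℝ)).smul_const u).const_add z) (by simp)
    rwa [one_smul] at h
  intro u u' huu'
  have heq : (fun t : ℝ => g (z + t • u)) = fun t => g (z + t • u') :=
    funext fun t => hg _ _ (by simp [huu'])
  exact (hline u).unique (heq ▸ hline u')

theorem apply_eq_mul {φ : (Fin n → ℝ) →L[ℝ] ℝ} (hφ : DependsOnlyOn φ k) (u : Fin n → ℝ) :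
    φ u = u k * φ (Pi.single k 1) := by
  rw [hφ u (u k • Pi.single k 1) (by simp), map_smul, smul_eq_mul]

end DependsOnlyOn

theorem dependsOnlyOn_of_fderiv {n : ℕ} {g : (Fin n → ℝ) → ℝ} {k : Fin n}
    (hg : Differentiable ℝ g) (hdg : ∀ x, DependsOnlyOn (fderiv ℝ g x) k) :
    DependsOnlyOn g k := by
  intro z z' hzz'
  have hd : ∀ t : ℝ, HasDerivAt (fun t : ℝ => g (z + t • (z' - z))) 0 t := fun t => by
    have h := (hg _).hasFDerivAt.comp_hasDerivAt t
      (((hasDerivAt_id t).smul_const (z' - z)).const_add z)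
    rwa [id, one_smul, hdg _ (z' - z) 0 (by simp [hzz']), map_zero] at h
  simpa using is_const_of_deriv_eq_zero (fun t => (hd t).differentiableAt)
    (fun t => (hd t).deriv) 0 1

theorem exists_forall_dependsOnlyOn_of_continuous {n : ℕ} {X : Type*} [TopologicalSpace X]
    [ConnectedSpace X] {φ : X → (Fin n → ℝ) →L[ℝ] ℝ} (hφ : Continuous φ) (hne : ∀ x, φ x ≠ 0)
    (hdep : ∀ x, ∃ k, DependsOnlyOn (φ x) k) : ∃ k, ∀ x, DependsOnlyOn (φ x) k := by
  choose K hK using hdep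
  have hsingle : ∀ x, φ x (Pi.single (K x) 1) ≠ 0 := fun x h =>
    hne x <| ContinuousLinearMap.ext fun u => by
      rw [(hK x).apply_eq_mul, h, mul_zero, zero_apply]
  have hK_lc : IsLocallyConstant K := by
    refine (IsLocallyConstant.iff_exists_open K).2 fun x =>
      ⟨{y | φ y (Pi.single (K x) 1) ≠ 0},
        isOpen_ne_fun (hφ.clm_apply continuous_const) continuous_const, hsingle x, fun y hy => ?_⟩
    by_contra hKyx
    exact hy ((hK y _ 0 (by simp [hKyx])).trans (map_zero _))
  obtain ⟨x₀⟩ := ConnectedSpace.toNonempty (α := X)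
  exact ⟨K x₀, fun x => hK_lc.apply_eq_of_preconnectedSpace x x₀ ▸ hK x⟩

theorem injective_of_surjective_of_dependsOnlyOn {m n : ℕ} {T : (Fin n → ℝ) →L[ℝ] (Fin m → ℝ)}
    (hT : Surjective T) {π : Fin m → Fin n}
    (hπ : ∀ i, DependsOnlyOn ((ContinuousLinearMap.proj i).comp T) (π i)) : Injective π := by
  intro i i' hii'
  by_contra hne
  obtain ⟨u, hu⟩ := hT (Pi.single i 1)
  obtain ⟨u', hu'⟩ := hT (Pi.single i' 1)
  have hi := (hπ i).apply_eq_mul u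
  have hi' := (hπ i').apply_eq_mul u
  have hi'' := (hπ i').apply_eq_mul u'
  simp only [ContinuousLinearMap.comp_apply, ContinuousLinearMap.proj_apply, hu, hu',
    Pi.single_eq_same, Pi.single_eq_of_ne' hne, hii'] at hi hi' hi''
  have hcol : T (Pi.single (π i') 1) i' = 0 :=
    (mul_eq_zero.1 hi'.symm).resolve_left fun h => by simp [h] at hi
  simp [hcol] at hi''

theorem surjective_fderiv_of_leftInverse {𝕜 E F : Type*} [NontriviallyNormedField 𝕜]
    [NormedAddCommGroup E] [NormedSpace 𝕜 E] [NormedAddCommGroup F] [NormedSpace 𝕜 F]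
    {v : E → F} {w : F → E} (hwv : LeftInverse w v) (hvw : RightInverse w v) {x : E}
    (hv : DifferentiableAt 𝕜 v x) (hw : DifferentiableAt 𝕜 w (v x)) :
    Surjective (fderiv 𝕜 v x) := by
  rw [← hwv x] at hv
  have hchain := fderiv_comp (v x) hv hw
  rw [hvw.comp_eq_id, fderiv_id, hwv x] at hchain
  exact LeftInverse.surjective fun y => (DFunLike.congr_fun hchain y).symm

namespace SingleParent

variable {m n : ℕ} {f : (Fin n → ℝ) → (Fin m → ℝ)}

theorem exists_fderiv_dependsOnlyOn_of_injective (hf : SingleParent f) {y : Fin n → ℝ}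
    (hfy : DifferentiableAt ℝ f y) (hinj : Injective (fderiv ℝ f y)) (i : Fin n) :
    ∃ j, DependsOnlyOn (fderiv ℝ (fun x => f x j) y) i ∧
      fderiv ℝ (fun x => f x j) y (Pi.single i 1) ≠ 0 := by
  simp only [fderiv_apply hfy, ContinuousLinearMap.comp_apply, ContinuousLinearMap.proj_apply]
  obtain ⟨j, hj⟩ : ∃ j, fderiv ℝ f y (Pi.single i 1) j ≠ 0 := by
    by_contra! h
    have h0 := hinj ((funext h).trans (map_zero _).symm)
    simpa using congrFun h0 i
  obtain ⟨k, hk⟩ := hf j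
  have hdk := hk.fderiv_dependsOnlyOn (differentiableAt_pi.1 hfy j)
  rw [fderiv_apply hfy] at hdk
  obtain rfl : k = i := by
    by_contra hki
    exact hj (by simpa using hdk (Pi.single i 1) 0 (by simp [Ne.symm hki]))
  exact ⟨j, hdk, hj⟩

theorem exists_fderiv_dependsOnlyOn_of_comp {p : ℕ} {v : (Fin p → ℝ) → (Fin n → ℝ)}
    (hf : SingleParent f) (hfv : SingleParent (f ∘ v)) {z : Fin p → ℝ}
    (hfd : DifferentiableAt ℝ f (v z)) (hinj : Injective (fderiv ℝ f (v z)))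
    (hv : DifferentiableAt ℝ v z) (i : Fin n) :
    ∃ k, DependsOnlyOn (fderiv ℝ (fun x => v x i) z) k := by
  obtain ⟨j, hji, hj0⟩ := hf.exists_fderiv_dependsOnlyOn_of_injective hfd hinj i
  obtain ⟨k, hk⟩ := hfv j
  have hfj : DifferentiableAt ℝ (fun x => f x j) (v z) := differentiableAt_pi.1 hfd j
  have hchain : ∀ u, fderiv ℝ (fun x => (f ∘ v) x j) z u =
      fderiv ℝ (fun x => v x i) z u * fderiv ℝ (fun x => f x j) (v z) (Pi.single i 1) := by
    intro u
    rw [show (fun x => (f ∘ v) x j) = (fun y => f y j) ∘ v from rfl, fderiv_comp z hfj hv,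
      ContinuousLinearMap.comp_apply, hji.apply_eq_mul, fderiv_apply hv]
    rfl
  have hdep := hk.fderiv_dependsOnlyOn (hfj.comp z hv)
  refine ⟨k, fun u u' huu' => mul_right_cancel₀ hj0 ?_⟩
  rw [← hchain, ← hchain]
  exact hdep u u' huu'

end SingleParent

theorem stmt0_general (d_z d_x : ℕ)
    (f fhat : (Fin d_z → ℝ) → (Fin d_x → ℝ))
    (hf : ContDiff ℝ 1 f)
    (hfderiv : ∀ z, Function.Injective (fderiv ℝ f z))
    (hsp : SingleParent f) (hsphat : SingleParent fhat)
    (v w : (Fin d_z → ℝ) → (Fin d_z → ℝ))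
    (hv : ContDiff ℝ 1 v) (hw : ContDiff ℝ 1 w)
    (hwv : Function.LeftInverse w v) (hvw : Function.RightInverse w v)
    (hcomp : f ∘ v = fhat) :
    ∃ π : Equiv.Perm (Fin d_z),
      ∀ i : Fin d_z, ∀ z z' : Fin d_z → ℝ, z (π i) = z' (π i) → v z i = v z' i := by
  have hfd := hf.differentiable one_ne_zero
  have hvd := hv.differentiable one_ne_zero
  have hDv : ∀ z, Surjective (fderiv ℝ v z) := fun z =>
    surjective_fderiv_of_leftInverse hwv hvw (hvd z) (hw.differentiable one_ne_zero (v z))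
  have hrow_ne : ∀ i z, fderiv ℝ (fun x => v x i) z ≠ 0 := fun i z h => by
    obtain ⟨u, hu⟩ := hDv z (Pi.single i 1)
    simpa [fderiv_apply (hvd z), hu] using DFunLike.congr_fun h u
  have hrow : ∀ i, ∃ k, ∀ z, DependsOnlyOn (fderiv ℝ (fun x => v x i) z) k := fun i =>
    exists_forall_dependsOnlyOn_of_continuous
      ((contDiff_pi.1 hv i).continuous_fderiv one_ne_zero) (hrow_ne i) fun z =>
      hsp.exists_fderiv_dependsOnlyOn_of_comp (hcomp ▸ hsphat) (hfd _) (hfderiv _) (hvd z) i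
  choose π hπ using hrow
  have hπ_inj : Injective π :=
    injective_of_surjective_of_dependsOnlyOn (hDv 0) fun i => fderiv_apply (hvd 0) i ▸ hπ i 0
  exact ⟨Equiv.ofBijective π (Finite.injective_iff_bijective.1 hπ_inj), fun i =>
    dependsOnlyOn_of_fderiv (differentiable_pi.1 hvd i) (hπ i)⟩

theorem stmt0 (d_z d_x : ℕ) (hdz : 0 < d_z) (hdx : 0 < d_x)
    (f fhat : (Fin d_z → ℝ) → (Fin d_x → ℝ))
    (hf : ContDiff ℝ 1 f) (hfinj : Function.Injective f)
    (hfderiv : ∀ z, Function.Injective (fderiv ℝ f z))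
    (hfhat : ContDiff ℝ 1 fhat) (hfhatinj : Function.Injective fhat)
    (hfhatderiv : ∀ z, Function.Injective (fderiv ℝ fhat z))
    (hsp : SingleParent f) (hsphat : SingleParent fhat)
    (v w : (Fin d_z → ℝ) → (Fin d_z → ℝ))
    (hv : ContDiff ℝ 1 v) (hw : ContDiff ℝ 1 w)
    (hwv : Function.LeftInverse w v) (hvw : Function.RightInverse w v)
    (hcomp : f ∘ v = fhat) :
    ∃ π : Equiv.Perm (Fin d_z),
      ∀ i : Fin d_z, ∀ z z' : Fin d_z → ℝ, z (π i) = z' (π i) → v z i = v z' i :=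
  stmt0_general d_z d_x f fhat hf hfderiv hsp hsphat v w hv hw hwv hvw hcomp
end

section
/- Let d_z, d_x be positive natural numbers, and let f, f̂ : (Fin d_z → ℝ) → (Fin d_x → ℝ) be continuously differentiable, injective maps whose derivative (fderiv) is injective at every point, and suppose both f and f̂ have single-parent structure. Let v : (Fin d_z → ℝ) → (Fin d_z → ℝ) be continuously differentiable with a continuously differentiable inverse, and suppose f ∘ v = f̂. Then for every z : Fin d_z → ℝ the Jacobian matrix Dv(z) (the matrix of partial derivatives of the coordinates of v at z) is a permutation-scaling matrix: there exists a permutation π_z of Fin d_z such that (Dv(z))_{i,j} ≠ 0 if and only if j = π_z(i). -/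
/-!
A function depending only on coordinate `k` has derivative `u ↦ u k * ∂ₖg`. Since `Df(v z)` is
injective, every input `i` has a child `j` of `f` with `∂ᵢf_j(v z) ≠ 0`; differentiating
`f̂_j = f_j ∘ v` then shows that row `i` of `Dv(z)` is a multiple of the single coordinate `σ i`,
the parent of `f̂_j`. As `w` is a differentiable left inverse, `Dv(z)` is injective, hence
surjective in finite dimension; this forces every multiple to be nonzero and `σ` to be injective,
so `σ` is a permutation.
-/

open Function

theorem exists_perm_apply_single_ne_zero_iff_of_surjective {K ι : Type*} [MulZeroOneClass K]
    [NoZeroDivisors K] [Nontrivial K] [Finite ι] [DecidableEq ι] {L : (ι → K) → ι → K}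
    (hL : Surjective L) {σ : ι → ι} {a : ι → K} (hrow : ∀ u i, L u i = u (σ i) * a i) :
    ∃ π : Equiv.Perm ι, ∀ i j, L (Pi.single j 1) i ≠ 0 ↔ j = π i := by
  choose e he using fun i => hL (Pi.single i 1)
  have he_row (i i' : ι) : e i (σ i') * a i' = (Pi.single i 1 : ι → K) i' := by rw [← hrow, he]
  have ha (i : ι) : a i ≠ 0 := right_ne_zero_of_mul_eq_one (by simpa using he_row i i)
  have hσ : Injective σ := by
    intro i i' hii'
    by_contra hne
    have h1 := he_row i i
    have h0 := he_row i i'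
    rw [Pi.single_eq_same] at h1
    rw [Pi.single_eq_of_ne (Ne.symm hne), ← hii'] at h0
    exact ha i' ((mul_eq_zero.mp h0).resolve_left (left_ne_zero_of_mul_eq_one h1))
  refine ⟨Equiv.ofBijective σ (Finite.injective_iff_bijective.mp hσ), fun i j => ?_⟩
  simp [hrow, ha i, Pi.single_apply, eq_comm]

theorem DependsOnlyOn.fderiv_apply_eq_zero {n : ℕ} {g : (Fin n → ℝ) → ℝ} {k : Fin n}
    (hg : DependsOnlyOn g k) (z : Fin n → ℝ) {u : Fin n → ℝ} (hu : u k = 0) :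
    fderiv ℝ g z u = 0 := by
  by_cases hd : DifferentiableAt ℝ g z
  · have hconst : (fun t : ℝ => g (z + t • u)) = fun _ => g z :=
      funext fun t => hg _ _ (by simp [hu])
    rw [← hd.lineDeriv_eq_fderiv, lineDeriv, hconst, deriv_const]
  · rw [fderiv_zero_of_not_differentiableAt hd, zero_apply]

theorem DependsOnlyOn.fderiv_apply {n : ℕ} {g : (Fin n → ℝ) → ℝ} {k : Fin n}
    (hg : DependsOnlyOn g k) (z u : Fin n → ℝ) :
    fderiv ℝ g z u = u k * fderiv ℝ g z (Pi.single k 1) := by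
  have hsplit : u = u k • Pi.single k 1 + (u - u k • Pi.single k 1) := by abel
  conv_lhs => rw [hsplit]
  rw [map_add, map_smul, hg.fderiv_apply_eq_zero z (u := u - u k • Pi.single k 1) (by simp),
    add_zero, smul_eq_mul]

theorem SingleParent.exists_dependsOnlyOn_fderiv_ne_zero {m n : ℕ}
    {f : (Fin m → ℝ) → Fin n → ℝ} (hsp : SingleParent f) {y : Fin m → ℝ}
    (hf : DifferentiableAt ℝ f y) (hinj : Injective (fderiv ℝ f y)) (i : Fin m) :
    ∃ j, DependsOnlyOn (fun x => f x j) i ∧ fderiv ℝ (fun x => f x j) y (Pi.single i 1) ≠ 0 := by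
  have hne : fderiv ℝ f y (Pi.single i 1) ≠ 0 :=
    (map_ne_zero_iff _ hinj).mpr (Pi.single_ne_zero_iff.mpr one_ne_zero)
  obtain ⟨j, hj⟩ := Function.ne_iff.mp hne
  have hj' : fderiv ℝ (fun x => f x j) y (Pi.single i 1) ≠ 0 := by
    rwa [fderiv_apply hf j]
  obtain ⟨k, hk⟩ := hsp j
  obtain rfl : k = i := by
    by_contra hki
    exact hj' (hk.fderiv_apply_eq_zero y (Pi.single_eq_of_ne hki 1))
  exact ⟨j, hk, hj'⟩

theorem SingleParent.exists_fderiv_apply_eq_mul_of_comp {m n : ℕ} {f : (Fin m → ℝ) → Fin n → ℝ}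
    {v : (Fin m → ℝ) → Fin m → ℝ} {z : Fin m → ℝ} (hsp : SingleParent f)
    (hspv : SingleParent (f ∘ v)) (hf : DifferentiableAt ℝ f (v z))
    (hinj : Injective (fderiv ℝ f (v z))) (hv : DifferentiableAt ℝ v z) (i : Fin m) :
    ∃ k a, ∀ u, fderiv ℝ v z u i = u k * a := by
  obtain ⟨j, hji, hc⟩ := hsp.exists_dependsOnlyOn_fderiv_ne_zero hf hinj i
  obtain ⟨k, hjk⟩ := hspv j
  have hfj : DifferentiableAt ℝ (fun y => f y j) (v z) := differentiableAt_pi.mp hf j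
  refine ⟨k, fderiv ℝ (fun x => (f ∘ v) x j) z (Pi.single k 1) /
    fderiv ℝ (fun x => f x j) (v z) (Pi.single i 1), fun u => ?_⟩
  have hchain : fderiv ℝ (fun x => (f ∘ v) x j) z u =
      fderiv ℝ v z u i * fderiv ℝ (fun x => f x j) (v z) (Pi.single i 1) := by
    rw [show (fun x => (f ∘ v) x j) = (fun y => f y j) ∘ v from rfl, fderiv_comp z hfj hv,
      ContinuousLinearMap.comp_apply, hji.fderiv_apply]
  rw [hjk.fderiv_apply] at hchain
  rw [mul_div_assoc', eq_div_iff hc]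
  exact hchain.symm

theorem Function.LeftInverse.injective_fderiv {𝕜 E F : Type*} [NontriviallyNormedField 𝕜]
    [NormedAddCommGroup E] [NormedSpace 𝕜 E] [NormedAddCommGroup F] [NormedSpace 𝕜 F]
    {v : E → F} {w : F → E} (h : LeftInverse w v) {z : E} (hw : DifferentiableAt 𝕜 w (v z))
    (hv : DifferentiableAt 𝕜 v z) : Injective (fderiv 𝕜 v z) := by
  have hid : (fderiv 𝕜 w (v z)).comp (fderiv 𝕜 v z) = ContinuousLinearMap.id 𝕜 E := by
    rw [← fderiv_comp z hw hv, h.comp_eq_id, fderiv_id]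
  exact LeftInverse.injective (g := fderiv 𝕜 w (v z)) fun u => by
    simpa using congrArg (· u) hid

theorem stmt1_general (d_z d_x : ℕ)
    (f fhat : (Fin d_z → ℝ) → (Fin d_x → ℝ))
    (hf : ContDiff ℝ 1 f)
    (hfderiv : ∀ z, Function.Injective (fderiv ℝ f z))
    (hsp : SingleParent f) (hsphat : SingleParent fhat)
    (v w : (Fin d_z → ℝ) → (Fin d_z → ℝ))
    (hv : ContDiff ℝ 1 v) (hw : ContDiff ℝ 1 w)
    (hwv : Function.LeftInverse w v)
    (hcomp : f ∘ v = fhat) :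
    ∀ z : Fin d_z → ℝ, ∃ π : Equiv.Perm (Fin d_z),
      ∀ i j : Fin d_z, fderiv ℝ v z (Pi.single j 1) i ≠ 0 ↔ j = π i := by
  intro z
  subst hcomp
  have hvz : DifferentiableAt ℝ v z := hv.differentiable one_ne_zero z
  have hDv : Injective (fderiv ℝ v z) :=
    hwv.injective_fderiv (hw.differentiable one_ne_zero (v z)) hvz
  choose σ a hrow using hsp.exists_fderiv_apply_eq_mul_of_comp hsphat
    (hf.differentiable one_ne_zero (v z)) (hfderiv (v z)) hvz
  exact exists_perm_apply_single_ne_zero_iff_of_surjective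
    (LinearMap.injective_iff_surjective.mp hDv) fun u i => hrow i u

theorem stmt1 (d_z d_x : ℕ) (hdz : 0 < d_z) (hdx : 0 < d_x)
    (f fhat : (Fin d_z → ℝ) → (Fin d_x → ℝ))
    (hf : ContDiff ℝ 1 f) (hfinj : Function.Injective f)
    (hfderiv : ∀ z, Function.Injective (fderiv ℝ f z))
    (hfhat : ContDiff ℝ 1 fhat) (hfhatinj : Function.Injective fhat)
    (hfhatderiv : ∀ z, Function.Injective (fderiv ℝ fhat z))
    (hsp : SingleParent f) (hsphat : SingleParent fhat)
    (v w : (Fin d_z → ℝ) → (Fin d_z → ℝ))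
    (hv : ContDiff ℝ 1 v) (hw : ContDiff ℝ 1 w)
    (hwv : Function.LeftInverse w v) (hvw : Function.RightInverse w v)
    (hcomp : f ∘ v = fhat) :
    ∀ z : Fin d_z → ℝ, ∃ π : Equiv.Perm (Fin d_z),
      ∀ i j : Fin d_z, fderiv ℝ v z (Pi.single j 1) i ≠ 0 ↔ j = π i :=
  stmt1_general d_z d_x f fhat hf hfderiv hsp hsphat v w hv hw hwv hcomp
end

section
/- Let W be a real matrix of size m × n (Matrix (Fin m) (Fin n) ℝ) with all entries non-negative and with orthonormal columns, i.e., Wᵀ * W = 1 (the n × n identity matrix). Then every row of W has at most one nonzero entry: for every row index i and column indices k ≠ k', at least one of W i k and W i k' is zero. -/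
open Matrix

theorem stmt14 (m n : ℕ) (W : Matrix (Fin m) (Fin n) ℝ)
    (hnonneg : ∀ (i : Fin m) (j : Fin n), 0 ≤ W i j)
    (horth : Wᵀ * W = 1) :
    ∀ (i : Fin m) (k k' : Fin n), k ≠ k' → W i k = 0 ∨ W i k' = 0 := by
  intro i k k' hkk'
  have hsum : ∑ j, W j k * W j k' = 0 := by
    have := congrFun (congrFun horth k) k'
    simpa [Matrix.mul_apply, Matrix.one_apply, hkk'] using this
  have hterm : W i k * W i k' = 0 := by
    have h := (Finset.sum_eq_zero_iff_of_nonneg (fun j _ =>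
      mul_nonneg (hnonneg j k) (hnonneg j k'))).mp hsum i (Finset.mem_univ i)
    exact h
  exact mul_eq_zero.mp hterm
end
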